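/- Let {B_k}_{k∈ℕ} be an enumeration of all closed cubes in ℝ^n whose sides are parallel to the coordinate axes, whose centers have all coordinates rational, and whose edge length equals 1/(2^{l−1}√n) for some l ∈ ℕ, l ≥ 1 (so that λ_n(B_k) ≤ 1 for every k). Fix positive reals t_k with Σ_{k=1}^∞ t_k = 1, and for a locally integrable f : ℝ^n → ℂ define ‖f‖_{KS^p} = (Σ_{k=1}^∞ t_k |∫_{B_k} f dλ_n|^p)^{1/p} for 1 ≤ p < ∞ and ‖f‖_{KS^∞} = sup_{k≥1} |∫_{B_k} f dλ_n|. Then for every 1 ≤ p ≤ ∞ and every 1 ≤ q ≤ ∞ and every f ∈ L^q(ℝ^n), one has ‖f‖_{KS^p} ≤ ‖f‖_{L^q}. In particular L^q(ℝ^n) embeds continuously into the KS^p-norm completion for all 1 ≤ p, q ≤ ∞. -/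

import Mathlib

open MeasureTheory
open scoped ENNReal

/-!
Every cube `B_k` has measure at most `1`, so by Hölder's inequality
`|∫_{B_k} f| ≤ ‖f‖_{L^1(B_k)} ≤ ‖f‖_{L^q(B_k)} λ_n(B_k)^{1 - 1/q} ≤ ‖f‖_{L^q}`.
A uniform bound `C` on the integrals `|∫_{B_k} f|` bounds their supremum as well as their
`p`-th power mean with respect to the probability weights `t_k`.
-/

/-- The closed cube in `ℝ^n` with center `c ∈ ℚ^n`, sides parallel to the coordinate
axes, and edge length `1/(2^(l-1) √n)`: the closed ball of radius half the edge length
around `c` in the sup metric on `ℝ^n`. -/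
def ratCube (n : ℕ) (c : Fin n → ℚ) (l : ℕ) : Set (Fin n → ℝ) :=
  Metric.closedBall (fun i => (c i : ℝ)) (1 / (2 ^ (l - 1) * Real.sqrt n) / 2)

/-- `B : ℕ → Set ℝ^n` enumerates the family of all closed cubes with sides parallel to
the coordinate axes, rational centers, and edge length `1/(2^(l-1) √n)` for some
`l ≥ 1`. -/
def EnumeratesRatCubes (n : ℕ) (B : ℕ → Set (Fin n → ℝ)) : Prop :=
  (∀ k, ∃ (c : Fin n → ℚ) (l : ℕ), 1 ≤ l ∧ B k = ratCube n c l) ∧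
  (∀ (c : Fin n → ℚ) (l : ℕ), 1 ≤ l → ∃ k, B k = ratCube n c l)

/-- The `KS^p` norm `(Σ_k t_k |∫_{B_k} f dλ_n|^p)^{1/p}` (for `p < ∞`), resp.
`sup_k |∫_{B_k} f dλ_n|` (for `p = ∞`). -/
noncomputable def KSnorm (n : ℕ) (B : ℕ → Set (Fin n → ℝ)) (t : ℕ → ℝ) (p : ℝ≥0∞)
    (f : (Fin n → ℝ) → ℂ) : ℝ :=
  if p = ⊤ then ⨆ k, ‖∫ x in B k, f x ∂volume‖
  else (∑' k, t k * ‖∫ x in B k, f x ∂volume‖ ^ p.toReal) ^ (1 / p.toReal)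

lemma volume_pi_closedBall_le_one {ι : Type*} [Fintype ι] (a : ι → ℝ) {r : ℝ}
    (hr₀ : 0 ≤ r) (hr : 2 * r ≤ 1) : volume (Metric.closedBall a r) ≤ 1 := by
  rw [Real.volume_pi_closedBall a hr₀]
  exact ENNReal.ofReal_le_one.mpr (pow_le_one₀ (by positivity) hr)

lemma ratCube_volume_le_one (n : ℕ) (c : Fin n → ℚ) (l : ℕ) : volume (ratCube n c l) ≤ 1 := by
  refine volume_pi_closedBall_le_one _ (by positivity) ?_
  rw [mul_div_cancel₀ _ two_ne_zero]
  rcases Nat.eq_zero_or_pos n with rfl | hn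
  · simp
  · have hsqrt : (1 : ℝ) ≤ Real.sqrt n := Real.one_le_sqrt.mpr (by exact_mod_cast hn)
    have hpow : (1 : ℝ) ≤ 2 ^ (l - 1) := one_le_pow₀ one_le_two
    exact div_le_one_of_le₀ (one_le_mul_of_one_le_of_one_le hpow hsqrt) (by positivity)

section SetIntegral

variable {α E : Type*} [MeasurableSpace α] [NormedAddCommGroup E] [NormedSpace ℝ E]
  {μ : Measure α} {q : ℝ≥0∞} {f : α → E} {s : Set α}

lemma enorm_setIntegral_le_eLpNorm (hq : 1 ≤ q) (hf : AEStronglyMeasurable f μ)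
    (hs : μ s ≤ 1) : ‖∫ x in s, f x ∂μ‖ₑ ≤ eLpNorm f q μ := by
  set e := 1 / (1 : ℝ≥0∞).toReal - 1 / q.toReal
  have he : 0 ≤ e := by
    have : (q⁻¹).toReal ≤ 1 := ENNReal.toReal_le_of_le_ofReal zero_le_one (by simpa using hq)
    simpa [e, ENNReal.toReal_inv] using this
  calc ‖∫ x in s, f x ∂μ‖ₑ ≤ eLpNorm f 1 (μ.restrict s) := by
        rw [eLpNorm_one_eq_lintegral_enorm]
        exact enorm_integral_le_lintegral_enorm f
    _ ≤ eLpNorm f q (μ.restrict s) * μ.restrict s Set.univ ^ e :=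
        eLpNorm_le_eLpNorm_mul_rpow_measure_univ hq hf.restrict
    _ ≤ eLpNorm f q μ * 1 := by
        gcongr
        · exact Measure.restrict_le_self
        · exact ENNReal.rpow_le_one (by rwa [Measure.restrict_apply_univ]) he
    _ = eLpNorm f q μ := mul_one _

lemma norm_setIntegral_le_toReal_eLpNorm (hq : 1 ≤ q) (hf : MemLp f q μ) (hs : μ s ≤ 1) :
    ‖∫ x in s, f x ∂μ‖ ≤ (eLpNorm f q μ).toReal := by
  simpa using ENNReal.toReal_mono hf.eLpNorm_ne_top (enorm_setIntegral_le_eLpNorm hq hf.1 hs)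

end SetIntegral

lemma tsum_mul_rpow_rpow_one_div_le {ι : Type*} {w a : ι → ℝ} {C r : ℝ} (hw : ∀ k, 0 ≤ w k)
    (hw₁ : ∑' k, w k = 1) (ha : ∀ k, 0 ≤ a k) (haC : ∀ k, a k ≤ C) (hC : 0 ≤ C) (hr : 0 < r) :
    (∑' k, w k * a k ^ r) ^ (1 / r) ≤ C := by
  have hw_summable : Summable w := by
    by_contra h
    simp [tsum_eq_zero_of_not_summable h] at hw₁
  have hterm_nonneg : ∀ k, 0 ≤ w k * a k ^ r := fun k =>
    mul_nonneg (hw k) (Real.rpow_nonneg (ha k) r)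
  have hterm : ∀ k, w k * a k ^ r ≤ w k * C ^ r := fun k =>
    mul_le_mul_of_nonneg_left (Real.rpow_le_rpow (ha k) (haC k) hr.le) (hw k)
  have hbound_summable : Summable fun k => w k * C ^ r := hw_summable.mul_right _
  have hsum : ∑' k, w k * a k ^ r ≤ C ^ r :=
    calc ∑' k, w k * a k ^ r ≤ ∑' k, w k * C ^ r :=
          (hbound_summable.of_nonneg_of_le hterm_nonneg hterm).tsum_le_tsum hterm hbound_summable
      _ = C ^ r := by rw [tsum_mul_right, hw₁, one_mul]
  rw [one_div, Real.rpow_inv_le_iff_of_pos (tsum_nonneg hterm_nonneg) hC hr]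
  exact hsum

lemma KSnorm_le_of_norm_setIntegral_le {n : ℕ} {B : ℕ → Set (Fin n → ℝ)} {t : ℕ → ℝ}
    {p : ℝ≥0∞} {f : (Fin n → ℝ) → ℂ} {C : ℝ} (ht : ∀ k, 0 ≤ t k) (hts : ∑' k, t k = 1)
    (hp : p ≠ 0) (hC : 0 ≤ C) (hfB : ∀ k, ‖∫ x in B k, f x‖ ≤ C) :
    KSnorm n B t p f ≤ C := by
  unfold KSnorm
  split_ifs with hp_top
  · exact ciSup_le hfB
  · exact tsum_mul_rpow_rpow_one_div_le ht hts (fun _ => norm_nonneg _) hfB hC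
      (ENNReal.toReal_pos hp hp_top)

/-- for all `1 ≤ p ≤ ∞`, `1 ≤ q ≤ ∞` and `f ∈ L^q(ℝ^n)`, one has
`‖f‖_{KS^p} ≤ ‖f‖_{L^q}`; hence `L^q(ℝ^n)` embeds continuously into `KS^p`. -/
theorem KSnorm_le_Lq_norm
    (n : ℕ) (B : ℕ → Set (Fin n → ℝ)) (hB : EnumeratesRatCubes n B)
    (t : ℕ → ℝ) (ht : ∀ k, 0 < t k) (hts : ∑' k, t k = 1)
    (p q : ℝ≥0∞) (hp : 1 ≤ p) (hq : 1 ≤ q)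
    (f : (Fin n → ℝ) → ℂ) (hf : MemLp f q volume) :
    KSnorm n B t p f ≤ (eLpNorm f q volume).toReal := by
  refine KSnorm_le_of_norm_setIntegral_le (fun k => (ht k).le) hts
    (zero_lt_one.trans_le hp).ne' ENNReal.toReal_nonneg fun k => ?_
  obtain ⟨c, l, -, hBk⟩ := hB.1 k
  exact norm_setIntegral_le_toReal_eLpNorm hq hf (hBk ▸ ratCube_volume_le_one n c l)
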